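/- Let 1 < p < ∞ and 1/p + 1/q = 1. For z ∈ 𝔻 let b_z(w) = (w − z)/(1 − conj(z)w) be the Blaschke factor and k_z(w) = (1 − |z|²)^{1/q}/(1 − conj(z)w). Then P_-(conj(b_z) k_z)(e^{iθ}) = (1 − |z|²)^{1/q} · e^{-iθ}/(1 − z e^{-iθ}), and there is a constant c > 0 such that ‖P_-(conj(b_z) k_z)‖_{L^p(𝕋)} ≥ c for all z with |z| sufficiently close to 1. -/

import Mathlib

open MeasureTheory Complex Filter Topology Metric Set AddCircle
open scoped ENNReal NNReal ComplexConjugate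

attribute [local instance] Classical.propDecidable

noncomputable section

instance : Fact (0 < 2 * Real.pi) := ⟨by positivity⟩

/-- The unit circle, parametrized as ℝ/2πℤ. -/
abbrev Tc := AddCircle (2 * Real.pi)

/-- Normalized Haar measure (dθ/2π) on the circle. -/
abbrev mTc : Measure Tc := AddCircle.haarAddCircle

/-- The boundary coordinate `e^{iθ}`. -/
def bc (x : Tc) : ℂ := fourier 1 x

/-- The Hardy space `H^p ⊆ L^p`: elements with vanishing negative Fourier coefficients. -/
def Hp (p : ℝ≥0∞) : Set (Lp ℂ p mTc) :=
  {f | ∀ n : ℤ, n < 0 → fourierCoeff (⇑f) n = 0}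

/-- `conj(H_0^p)`: elements with vanishing Fourier coefficients of index `≥ 0`. -/
def conjH0p (p : ℝ≥0∞) : Set (Lp ℂ p mTc) :=
  {f | ∀ n : ℤ, 0 ≤ n → fourierCoeff (⇑f) n = 0}

/-- Multiplication of an `L^p` element by a function (junk value `0` if the product
is not in `L^p`). -/
def mulLp {p : ℝ≥0∞} (ψ : Tc → ℂ) (f : Lp ℂ p mTc) : Lp ℂ p mTc :=
  if h : MemLp (fun x => ψ x * f x) p mTc then h.toLp _ else 0

/-- The element of `L^p` given by a function (junk value `0` if not in `L^p`). -/
def toLp' (p : ℝ≥0∞) (f : Tc → ℂ) : Lp ℂ p mTc :=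
  if h : MemLp f p mTc then h.toLp f else 0

/-- A function of the Hardy class `H^∞`: a bounded holomorphic function on the unit disc
together with its boundary values on the circle. -/
structure Hinf where
  toFun : ℂ → ℂ
  bdry : Tc → ℂ
  bound : ℝ
  analytic : DifferentiableOn ℂ toFun (ball (0 : ℂ) 1)
  le_bound : ∀ z ∈ ball (0 : ℂ) 1, ‖toFun z‖ ≤ bound
  bdry_meas : Measurable bdry
  bdry_le_bound : ∀ᵐ x ∂mTc, ‖bdry x‖ ≤ bound
  coeff_neg : ∀ n : ℤ, n < 0 → fourierCoeff bdry n = 0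
  taylor : ∀ z ∈ ball (0 : ℂ) 1,
    HasSum (fun n : ℕ => fourierCoeff bdry (n : ℤ) * z ^ n) (toFun z)

/-- Inner function: boundary values of modulus `1` a.e. -/
def Hinf.Inner (I : Hinf) : Prop := ∀ᵐ x ∂mTc, ‖I.bdry x‖ = 1

/-- Outer function: `log|φ(0)| = (1/2π) ∫ log|φ(e^{iθ})| dθ`. -/
def Hinf.Outer (φ : Hinf) : Prop :=
  φ.toFun 0 ≠ 0 ∧ Integrable (fun x => Real.log ‖φ.bdry x‖) mTc ∧
    Real.log ‖φ.toFun 0‖ = ∫ x, Real.log ‖φ.bdry x‖ ∂mTc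

/-- `K_I^p = H^p ∩ conj(I)·conj(H_0^p)`: those `f ∈ H^p` such that `I·f` has vanishing
Fourier coefficients of index `≥ 0` (i.e. `I·f ∈ conj(H_0^p)`). -/
def KIp (p : ℝ≥0∞) (I : Hinf) : Set (Lp ℂ p mTc) :=
  {f | f ∈ Hp p ∧ ∀ n : ℤ, 0 ≤ n → fourierCoeff (fun x => I.bdry x * f x) n = 0}

/-- `IsRieszProj Pp` asserts that the bounded operator `Pp` is the Riesz projection `P₊`,
keeping the nonnegative Fourier coefficients and killing the negative ones. -/
def IsRieszProj {p : ℝ≥0∞} [Fact (1 ≤ p)] (Pp : Lp ℂ p mTc →L[ℂ] Lp ℂ p mTc) : Prop :=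
  ∀ f : Lp ℂ p mTc, ∀ n : ℤ,
    fourierCoeff (⇑(Pp f)) n = if 0 ≤ n then fourierCoeff (⇑f) n else 0

/-- The Toeplitz operator `T_ψ f = P₊(ψ f)`. -/
def toep {p : ℝ≥0∞} [Fact (1 ≤ p)] (Pp : Lp ℂ p mTc →L[ℂ] Lp ℂ p mTc) (ψ : Tc → ℂ)
    (f : Lp ℂ p mTc) : Lp ℂ p mTc := Pp (mulLp ψ f)

/-- The Hankel operator `H_ψ f = P₋(ψ f) = ψ f − P₊(ψ f)`. -/
def hankel {p : ℝ≥0∞} [Fact (1 ≤ p)] (Pp : Lp ℂ p mTc →L[ℂ] Lp ℂ p mTc) (ψ : Tc → ℂ)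
    (f : Lp ℂ p mTc) : Lp ℂ p mTc := mulLp ψ f - Pp (mulLp ψ f)

/-- The projection `P_I f = I·P₋(conj(I)·f)` of `H^p` onto `K_I^p`. -/
def PIproj {p : ℝ≥0∞} [Fact (1 ≤ p)] (Pp : Lp ℂ p mTc →L[ℂ] Lp ℂ p mTc) (I : Hinf)
    (f : Lp ℂ p mTc) : Lp ℂ p mTc :=
  mulLp I.bdry (hankel Pp (fun x => (starRingEnd ℂ) (I.bdry x)) f)

/-- The compressed shift `S^I f = P_I (z f)`. -/
def SI {p : ℝ≥0∞} [Fact (1 ≤ p)] (Pp : Lp ℂ p mTc →L[ℂ] Lp ℂ p mTc) (I : Hinf)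
    (f : Lp ℂ p mTc) : Lp ℂ p mTc := PIproj Pp I (mulLp bc f)

/-- The compressed Toeplitz operator `T_φ^I = P_I T_φ` on `K_I^p`. -/
def toepI {p : ℝ≥0∞} [Fact (1 ≤ p)] (Pp : Lp ℂ p mTc →L[ℂ] Lp ℂ p mTc) (I : Hinf) (ψ : Tc → ℂ)
    (f : Lp ℂ p mTc) : Lp ℂ p mTc := PIproj Pp I (toep Pp ψ f)

/-- The shift-invariant subspace `I·H^p`. -/
def IHp (p : ℝ≥0∞) (I : Hinf) : Set (Lp ℂ p mTc) :=
  {h | ∃ u ∈ Hp p, h = mulLp I.bdry u}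

/-- The pairing `⟨f,g⟩ = (1/2π) ∫ f conj(g) dθ`. -/
def pairing (f g : Tc → ℂ) : ℂ := ∫ x, f x * (starRingEnd ℂ) (g x) ∂mTc
/-- The function `conj(b_z)·k_z` on the circle, where `b_z` is the Blaschke factor at `z`
and `k_z(w) = (1-|z|²)^{1/q}/(1-conj(z)w)`. -/
def bkfun (q : ℝ) (z : ℂ) (x : Tc) : ℂ :=
  (starRingEnd ℂ) ((bc x - z) / (1 - (starRingEnd ℂ) z * bc x)) *
    ((((1 - ‖z‖ ^ 2) ^ (1 / q) : ℝ) : ℂ) / (1 - (starRingEnd ℂ) z * bc x))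


/-! For `‖z‖ < 1` one has `conj (b_z) k_z = C e^{-iθ} / (1 - z e^{-iθ})` with
`C = (1 - ‖z‖²)^{1/q}`, and the geometric series `Σ z^k e^{-i(k+1)θ}` shows that this function has
no Fourier coefficient of index `≥ 0`. An `Lᵖ` function with `p > 1` is determined by its Fourier
coefficients (pair it with the characters, whose span is dense in `L^q`), so `P₊` kills it and
`P₋` fixes it.

For the lower bound put `t = 1 - ‖z‖`. On the arc of length `2t` centred at `z / ‖z‖` we have
`‖1 - z e^{-iθ}‖ ≤ 2t`, so the `Lᵖ` norm is at least
`C / (2t) · (t / π)^{1/p} ≥ t^{1/q + 1/p - 1} / (2 π^{1/p}) = 1 / (2 π^{1/p})`. -/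

open scoped Real

lemma ofReal_mul_measure_rpow_le_eLpNorm {α E : Type*} [MeasurableSpace α] [NormedAddCommGroup E]
    {μ : Measure α} {f : α → E} {s : Set α} (hs : MeasurableSet s) {p : ℝ≥0∞} (hp : p ≠ 0)
    (hp_top : p ≠ ∞) {ε : ℝ} (hε : ∀ x ∈ s, ε ≤ ‖f x‖) :
    ENNReal.ofReal ε * μ s ^ (1 / p.toReal) ≤ eLpNorm f p μ := by
  rcases le_or_gt ε 0 with hε₀ | hε₀
  · simp [ENNReal.ofReal_of_nonpos hε₀]
  calc ENNReal.ofReal ε * μ s ^ (1 / p.toReal) = eLpNorm (s.indicator fun _ => ε) p μ := by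
        rw [eLpNorm_indicator_const hs hp hp_top, Real.enorm_of_nonneg hε₀.le]
    _ ≤ eLpNorm f p μ := eLpNorm_mono fun x => by
        by_cases hx : x ∈ s
        · simpa [hx, abs_of_pos hε₀] using hε x hx
        · simp [hx]

namespace AddCircle

variable {T : ℝ} [hT : Fact (0 < T)]

theorem Lp_eq_zero_of_fourierCoeff_eq_zero {p q : ℝ≥0∞} [hpq : p.HolderConjugate q]
    (hq : q ≠ ∞) (u : Lp ℂ p (haarAddCircle (T := T))) (hu : ∀ n, fourierCoeff (⇑u) n = 0) :
    u = 0 := by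
  have : Fact (1 ≤ p) := ⟨hpq.one_le⟩
  have : Fact (1 ≤ q) := ⟨hpq.symm.one_le⟩
  set L := (ContinuousLinearMap.mul ℂ ℂ).lpPairing haarAddCircle p q u
  have hL_apply (φ : Lp ℂ q (haarAddCircle (T := T))) : L φ = ∫ x, u x * φ x ∂haarAddCircle :=
    (ContinuousLinearMap.mul ℂ ℂ).lpPairing_eq_integral u φ
  have hL : L = 0 := by
    refine ContinuousLinearMap.ext_on
      (Submodule.dense_iff_topologicalClosure_eq_top.mpr (span_fourierLp_closure_eq_top hq)) ?_
    rintro _ ⟨n, rfl⟩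
    rw [hL_apply, zero_apply, ← hu (-n), fourierCoeff]
    refine integral_congr_ae ?_
    filter_upwards [coeFn_fourierLp q n] with x hx
    rw [hx, neg_neg, smul_eq_mul, mul_comm]
  rw [Lp.eq_zero_iff_ae_eq_zero]
  refine ((Lp.memLp u).integrable hpq.one_le).ae_eq_zero_of_forall_setIntegral_eq_zero
    fun s hs _ => ?_
  have hs_ind := congr($hL (indicatorConstLp q hs (measure_ne_top _ s) (1 : ℂ)))
  rw [hL_apply, zero_apply] at hs_ind
  rw [← integral_indicator hs, ← hs_ind]
  refine integral_congr_ae ?_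
  filter_upwards [indicatorConstLp_coeFn (p := q) (hs := hs) (hμs := measure_ne_top _ s)
    (c := (1 : ℂ))] with x hx
  by_cases hxs : x ∈ s <;> simp [hx, hxs]

lemma haarAddCircle_closedBall (x : AddCircle T) {ε : ℝ} (hε : 2 * ε ≤ T) :
    haarAddCircle (closedBall x ε) = ENNReal.ofReal (2 * ε / T) := by
  have h := volume_closedBall (T := T) (x := x) ε
  rw [volume_eq_smul_haarAddCircle, Measure.smul_apply, smul_eq_mul, min_eq_right hε] at h
  rw [ENNReal.ofReal_div_of_pos hT.out, ← h, mul_comm,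
    ENNReal.mul_div_cancel_right (by simpa using hT.out) ENNReal.ofReal_ne_top]

end AddCircle

lemma bc_coe (s : ℝ) : bc s = Complex.exp (s * I) := by
  rw [bc, fourier_coe_apply]
  congr 1
  field_simp
  push_cast
  ring

lemma bc_add (x y : Tc) : bc (x + y) = bc x * bc y := by
  simp only [bc, fourier_one, toCircle_add, Circle.coe_mul]

lemma norm_bc (x : Tc) : ‖bc x‖ = 1 := Circle.norm_coe _

lemma norm_conj_bc (x : Tc) : ‖conj (bc x)‖ = 1 := by rw [RCLike.norm_conj, norm_bc]

lemma bc_mul_conj_bc (x : Tc) : bc x * conj (bc x) = 1 := by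
  rw [Complex.mul_conj, Complex.normSq_eq_norm_sq, norm_bc]; norm_num

lemma norm_bc_sub_one_le (x : Tc) : ‖bc x - 1‖ ≤ ‖x‖ := by
  obtain ⟨s, rfl⟩ := QuotientAddGroup.mk_surjective x
  set s' := s - round ((2 * π)⁻¹ * s) * (2 * π)
  have hs' : (s' : Tc) = s := by
    rw [AddCircle.coe_sub, (AddCircle.coe_eq_zero_iff _).mpr ⟨_, zsmul_eq_mul _ _⟩, sub_zero]
  rw [AddCircle.norm_eq, ← hs', bc_coe, mul_comm]
  exact Real.norm_exp_I_mul_ofReal_sub_one_le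

lemma dist_bc_le (x y : Tc) : dist (bc x) (bc y) ≤ dist x y := by
  have : bc x - bc y = (bc (x - y) - 1) * bc y := by rw [sub_mul, ← bc_add, sub_add_cancel, one_mul]
  rw [dist_eq_norm, this, norm_mul, norm_bc, mul_one, dist_eq_norm]
  exact norm_bc_sub_one_le _

lemma norm_one_sub_mul_conj_bc_le {z : ℂ} (hz : ‖z‖ ≤ 1) (x : Tc) :
    ‖1 - z * conj (bc x)‖ ≤ dist x (arg z : Tc) + (1 - ‖z‖) := by
  have hfactor : 1 - z * conj (bc x) = (bc x - z) * conj (bc x) := by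
    linear_combination -bc_mul_conj_bc x
  have hpolar : bc (arg z) - z = (1 - ‖z‖ : ℝ) * Complex.exp (arg z * I) := by
    rw [bc_coe]
    nth_rewrite 2 [← Complex.norm_mul_exp_arg_mul_I z]
    push_cast; ring
  calc ‖1 - z * conj (bc x)‖ = ‖bc x - z‖ := by rw [hfactor, norm_mul, norm_conj_bc, mul_one]
    _ ≤ dist (bc x) (bc (arg z)) + ‖bc (arg z) - z‖ := by
        rw [dist_eq_norm]; exact norm_sub_le_norm_sub_add_norm_sub _ _ _
    _ ≤ dist x (arg z : Tc) + (1 - ‖z‖) := by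
        rw [hpolar, norm_mul, Complex.norm_exp_ofReal_mul_I, mul_one, Complex.norm_real,
          Real.norm_of_nonneg (by linarith)]
        gcongr
        exact dist_bc_le _ _

lemma one_sub_mul_conj_bc_ne_zero {z : ℂ} (hz : ‖z‖ < 1) (x : Tc) : 1 - z * conj (bc x) ≠ 0 := by
  intro h
  have := congr(‖$(sub_eq_zero.mp h)‖)
  rw [norm_one, norm_mul, norm_conj_bc, mul_one] at this
  linarith

def conjCauchyKernel (z : ℂ) (x : Tc) : ℂ := conj (bc x) / (1 - z * conj (bc x))

lemma continuous_conjCauchyKernel {z : ℂ} (hz : ‖z‖ < 1) : Continuous (conjCauchyKernel z) := by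
  have hconj : Continuous fun x => conj (bc x) :=
    Complex.continuous_conj.comp (fourier 1).continuous
  exact hconj.div (continuous_const.sub (continuous_const.mul hconj))
    (one_sub_mul_conj_bc_ne_zero hz)

lemma memLp_conjCauchyKernel {z : ℂ} (hz : ‖z‖ < 1) (p : ℝ≥0∞) :
    MemLp (conjCauchyKernel z) p mTc :=
  (continuous_conjCauchyKernel hz).memLp_of_hasCompactSupport (.of_compactSpace _)

lemma fourier_neg_natCast_eq_conj_bc_pow (k : ℕ) (x : Tc) : fourier (-k) x = conj (bc x) ^ k := by
  rw [fourier_neg, fourier_apply, natCast_zsmul, toCircle_nsmul, Circle.coe_pow, ← fourier_one,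
    map_pow, bc]

lemma hasSum_conjCauchyKernel {z : ℂ} (hz : ‖z‖ < 1) (x : Tc) :
    HasSum (fun k : ℕ => z ^ k * fourier (-(k + 1 : ℕ)) x) (conjCauchyKernel z x) := by
  have hgeom := (hasSum_geometric_of_norm_lt_one (ξ := z * conj (bc x))
    (by rwa [norm_mul, norm_conj_bc, mul_one])).mul_left (conj (bc x))
  rw [conjCauchyKernel, div_eq_mul_inv]
  refine hgeom.congr_fun fun k => ?_
  rw [fourier_neg_natCast_eq_conj_bc_pow]
  ring

lemma fourierCoeff_conjCauchyKernel {z : ℂ} (hz : ‖z‖ < 1) {n : ℤ} (hn : 0 ≤ n) :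
    fourierCoeff (conjCauchyKernel z) n = 0 := by
  set F : ℕ → Tc → ℂ := fun k x => fourier (-n) x • (z ^ k * fourier (-(k + 1 : ℕ)) x)
  have hF_int (k : ℕ) : Integrable (F k) mTc :=
    memLp_one_iff_integrable.mp ((by fun_prop : Continuous (F k)).memLp_of_hasCompactSupport
      (.of_compactSpace _))
  have hF_norm (k : ℕ) : ∫ x, ‖F k x‖ ∂mTc = ‖z‖ ^ k := by
    simp [F, norm_pow, Circle.norm_coe]
  have hF_zero (k : ℕ) : ∫ x, F k x ∂mTc = 0 := by
    change fourierCoeff (fun x => z ^ k * fourier (-(k + 1 : ℕ)) x) n = 0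
    rw [fourierCoeff.const_mul, fourierCoeff_fourier, Pi.single_eq_of_ne (by omega), mul_zero]
  calc fourierCoeff (conjCauchyKernel z) n = ∫ x, ∑' k, F k x ∂mTc := by
        refine integral_congr_ae (.of_forall fun x => ?_)
        exact (((hasSum_conjCauchyKernel hz x).const_smul (fourier (-n) x)).tsum_eq).symm
    _ = ∑' k, ∫ x, F k x ∂mTc := (integral_tsum_of_summable_integral_norm hF_int
        (by simpa only [hF_norm] using summable_geometric_of_lt_one (norm_nonneg z) hz)).symm
    _ = 0 := by simp [hF_zero]

lemma bkfun_eq {q : ℝ} {z : ℂ} (hz : ‖z‖ < 1) (x : Tc) :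
    bkfun q z x = (((1 - ‖z‖ ^ 2) ^ (1 / q) : ℝ) : ℂ) * conj (bc x) / (1 - z * conj (bc x)) := by
  have hd : 1 - conj z * bc x ≠ 0 := by
    have := one_sub_mul_conj_bc_ne_zero hz x
    contrapose! this
    simpa using congr(conj $this)
  rw [bkfun, map_div₀, div_mul_div_comm, div_eq_div_iff (mul_ne_zero ((map_ne_zero _).mpr hd) hd)
    (one_sub_mul_conj_bc_ne_zero hz x)]
  simp only [map_sub, map_one, map_mul, Complex.conj_conj]
  linear_combination
    (((1 - ‖z‖ ^ 2) ^ (1 / q) : ℝ) : ℂ) * (1 - z * conj (bc x)) * conj z * bc_mul_conj_bc x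

lemma bkfun_eq_mul_conjCauchyKernel {q : ℝ} {z : ℂ} (hz : ‖z‖ < 1) :
    bkfun q z = fun x => (((1 - ‖z‖ ^ 2) ^ (1 / q) : ℝ) : ℂ) * conjCauchyKernel z x :=
  funext fun x => by rw [bkfun_eq hz, conjCauchyKernel, mul_div_assoc]

lemma memLp_bkfun {q : ℝ} {z : ℂ} (hz : ‖z‖ < 1) (p : ℝ≥0∞) : MemLp (bkfun q z) p mTc := by
  rw [bkfun_eq_mul_conjCauchyKernel hz]
  exact (memLp_conjCauchyKernel hz p).const_mul _

lemma toLp'_of_memLp {p : ℝ≥0∞} {f : Tc → ℂ} (hf : MemLp f p mTc) : toLp' p f = hf.toLp f :=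
  dif_pos hf

lemma toLp'_bkfun_mem_conjH0p {q : ℝ} {z : ℂ} (hz : ‖z‖ < 1) (p : ℝ≥0∞) :
    toLp' p (bkfun q z) ∈ conjH0p p := fun n hn => by
  rw [toLp'_of_memLp (memLp_bkfun hz p), fourierCoeff_congr_ae (MemLp.coeFn_toLp _),
    bkfun_eq_mul_conjCauchyKernel hz, fourierCoeff.const_mul,
    fourierCoeff_conjCauchyKernel hz hn, mul_zero]

lemma IsRieszProj.apply_eq_zero_of_mem_conjH0p {p q : ℝ≥0∞} [Fact (1 ≤ p)] [p.HolderConjugate q]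
    (hq : q ≠ ∞) {Pp : Lp ℂ p mTc →L[ℂ] Lp ℂ p mTc} (hPp : IsRieszProj Pp) {f : Lp ℂ p mTc}
    (hf : f ∈ conjH0p p) : Pp f = 0 :=
  AddCircle.Lp_eq_zero_of_fourierCoeff_eq_zero hq _ fun n => by
    rw [hPp]
    split_ifs with hn
    exacts [hf n hn, rfl]

lemma norm_bkfun {q : ℝ} {z : ℂ} (hz : ‖z‖ < 1) (x : Tc) :
    ‖bkfun q z x‖ = (1 - ‖z‖ ^ 2) ^ (1 / q) / ‖1 - z * conj (bc x)‖ := by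
  rw [bkfun_eq hz, norm_div, norm_mul, norm_conj_bc, mul_one, Complex.norm_real,
    Real.norm_of_nonneg (Real.rpow_nonneg (by nlinarith [norm_nonneg z]) _)]

lemma ofReal_inv_two_mul_pi_rpow_le_eLpNorm_bkfun {p q : ℝ} (hpq : p.HolderConjugate q) {z : ℂ}
    (hz : ‖z‖ < 1) : ENNReal.ofReal (2 * π ^ (1 / p))⁻¹ ≤ eLpNorm (bkfun q z) (.ofReal p) mTc := by
  set t := 1 - ‖z‖
  have ht : 0 < t := by linarith
  set C := (1 - ‖z‖ ^ 2) ^ (1 / q)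
  have hC : t ^ (1 / q) ≤ C :=
    Real.rpow_le_rpow ht.le (by nlinarith [norm_nonneg z]) (by have := hpq.symm.pos; positivity)
  have hC₀ : 0 ≤ C := (by positivity : 0 ≤ t ^ (1 / q)).trans hC
  have hball : ∀ x ∈ closedBall (arg z : Tc) t, C / (2 * t) ≤ ‖bkfun q z x‖ := by
    intro x hx
    rw [norm_bkfun hz]
    exact div_le_div_of_nonneg_left hC₀ (norm_pos_iff.mpr (one_sub_mul_conj_bc_ne_zero hz x))
      (by linarith [norm_one_sub_mul_conj_bc_le hz.le x, mem_closedBall.mp hx])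
  have hmeas : mTc (closedBall (arg z : Tc) t) = ENNReal.ofReal (t / π) := by
    rw [AddCircle.haarAddCircle_closedBall _ (by linarith [Real.pi_gt_three, norm_nonneg z])]
    congr 1
    field_simp
  have hreal : (2 * π ^ (1 / p))⁻¹ ≤ C / (2 * t) * (t / π) ^ (1 / p) := calc
    (2 * π ^ (1 / p))⁻¹ = t ^ (1 / q) / (2 * t) * (t ^ (1 / p) / π ^ (1 / p)) := by
        have htt : t ^ (1 / p) * t ^ (1 / q) = t := by
          rw [← Real.rpow_add ht, one_div, one_div, hpq.inv_add_inv_eq_one, Real.rpow_one]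
        rw [div_mul_div_comm, mul_comm (t ^ (1 / q)), htt]
        field_simp
    _ ≤ C / (2 * t) * (t / π) ^ (1 / p) := by
        rw [Real.div_rpow ht.le Real.pi_pos.le]
        gcongr
  calc ENNReal.ofReal (2 * π ^ (1 / p))⁻¹
      ≤ ENNReal.ofReal (C / (2 * t)) * ENNReal.ofReal (t / π) ^ (1 / p) := by
        rw [ENNReal.ofReal_rpow_of_nonneg (by positivity) (by have := hpq.pos; positivity),
          ← ENNReal.ofReal_mul (by positivity)]
        exact ENNReal.ofReal_le_ofReal hreal
    _ ≤ eLpNorm (bkfun q z) (.ofReal p) mTc := by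
        have := ofReal_mul_measure_rpow_le_eLpNorm (μ := mTc) measurableSet_closedBall
          (by simpa using hpq.pos) ENNReal.ofReal_ne_top hball
        rwa [hmeas, ENNReal.toReal_ofReal hpq.nonneg] at this

theorem Pminus_conj_blaschke_kernel_general (p q : ℝ) (hp : 1 < p)
    (hpq : 1 / p + 1 / q = 1) [Fact ((1 : ℝ≥0∞) ≤ ENNReal.ofReal p)]
    (Pp : Lp ℂ (ENNReal.ofReal p) mTc →L[ℂ] Lp ℂ (ENNReal.ofReal p) mTc)
    (hPp : IsRieszProj Pp) :
    (∀ z ∈ ball (0 : ℂ) 1,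
      (⇑(toLp' (ENNReal.ofReal p) (bkfun q z) - Pp (toLp' (ENNReal.ofReal p) (bkfun q z)))
          : Tc → ℂ) =ᵐ[mTc]
        fun x => (((1 - ‖z‖ ^ 2) ^ (1 / q) : ℝ) : ℂ) * (starRingEnd ℂ) (bc x) /
          (1 - z * (starRingEnd ℂ) (bc x))) ∧
    (∃ c r : ℝ, 0 < c ∧ r < 1 ∧ ∀ z : ℂ, r < ‖z‖ → ‖z‖ < 1 →
      c ≤ ‖toLp' (ENNReal.ofReal p) (bkfun q z) -
            Pp (toLp' (ENNReal.ofReal p) (bkfun q z))‖) := by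
  have hpq' : p.HolderConjugate q :=
    Real.holderConjugate_iff.mpr ⟨hp, by simpa only [one_div] using hpq⟩
  have := hpq'.ennrealOfReal
  have hPminus {z : ℂ} (hz : ‖z‖ < 1) :
      toLp' (ENNReal.ofReal p) (bkfun q z) - Pp (toLp' (ENNReal.ofReal p) (bkfun q z)) =
        (memLp_bkfun (q := q) hz _).toLp (bkfun q z) := by
    rw [hPp.apply_eq_zero_of_mem_conjH0p (q := .ofReal q) ENNReal.ofReal_ne_top
      (toLp'_bkfun_mem_conjH0p hz _), sub_zero, toLp'_of_memLp]
  refine ⟨fun z hz => ?_, (2 * π ^ (1 / p))⁻¹, 0, by positivity, zero_lt_one, fun z _ hz => ?_⟩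
  · rw [mem_ball_zero_iff] at hz
    rw [hPminus hz]
    exact (MemLp.coeFn_toLp _).trans (.of_forall (bkfun_eq hz))
  · rw [hPminus hz, Lp.norm_toLp,
      ← ENNReal.ofReal_le_iff_le_toReal (memLp_bkfun hz _).eLpNorm_ne_top]
    exact ofReal_inv_two_mul_pi_rpow_le_eLpNorm_bkfun hpq' hz

/-- `P₋(conj(b_z) k_z)(e^{iθ}) = (1-|z|²)^{1/q} e^{-iθ}/(1-z e^{-iθ})`,
and `‖P₋(conj(b_z) k_z)‖_{L^p}` is bounded below by a positive constant for `|z|` close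
to `1`. -/
theorem Pminus_conj_blaschke_kernel (p q : ℝ) (hp : 1 < p) (hq : 1 < q)
    (hpq : 1 / p + 1 / q = 1) [Fact ((1 : ℝ≥0∞) ≤ ENNReal.ofReal p)]
    (Pp : Lp ℂ (ENNReal.ofReal p) mTc →L[ℂ] Lp ℂ (ENNReal.ofReal p) mTc)
    (hPp : IsRieszProj Pp) :
    (∀ z ∈ ball (0 : ℂ) 1,
      (⇑(toLp' (ENNReal.ofReal p) (bkfun q z) - Pp (toLp' (ENNReal.ofReal p) (bkfun q z)))
          : Tc → ℂ) =ᵐ[mTc]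
        fun x => (((1 - ‖z‖ ^ 2) ^ (1 / q) : ℝ) : ℂ) * (starRingEnd ℂ) (bc x) /
          (1 - z * (starRingEnd ℂ) (bc x))) ∧
    (∃ c r : ℝ, 0 < c ∧ r < 1 ∧ ∀ z : ℂ, r < ‖z‖ → ‖z‖ < 1 →
      c ≤ ‖toLp' (ENNReal.ofReal p) (bkfun q z) -
            Pp (toLp' (ENNReal.ofReal p) (bkfun q z))‖) :=
  Pminus_conj_blaschke_kernel_general p q hp hpq Pp hPp
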